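/- Let α>0, φ ∈ L^∞(ℂ^n), and let w be any weight on ℂ^n. If there exists C>0 such that for every f ∈ L^1_{α,w} the integral defining T_φ f(z) converges absolutely for almost every z and ‖T_φ f‖_{L^1_{α,w}} ≤ C‖f‖_{L^1_{α,w}}, then for every r>0, sup over all cubes Q of side length r of (v(Q)^{−1}∫_Q w dv)·esssup_{z∈Q} |φ(z)|/w(z) is finite. -/

import Mathlib

open MeasureTheory Filter
open scoped ENNReal Topology

noncomputable section

/-- `ℂⁿ` with its Euclidean (Hermitian) structure. -/
abbrev Cn (n : ℕ) := EuclideanSpace ℂ (Fin n)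

instance (n : ℕ) : MeasurableSpace (Cn n) := WithLp.measurableSpace 2 _
instance (n : ℕ) : BorelSpace (Cn n) := PiLp.borelSpace 2
instance (n : ℕ) : InnerProductSpace ℝ (Cn n) := InnerProductSpace.rclikeToReal ℂ (Cn n)

/-- The Hermitian inner product `⟨u,z⟩ = ∑ⱼ uⱼ conj(zⱼ)`. -/
def pInner {n : ℕ} (u z : Cn n) : ℂ := ∑ j, u j * (starRingEnd ℂ) (z j)

/-- The axis-parallel cube of side length `r` centered at `z`. -/
def cube {n : ℕ} (r : ℝ) (z : Cn n) : Set (Cn n) :=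
  {u | ∀ j, |(u j - z j).re| < r / 2 ∧ |(u j - z j).im| < r / 2}

/-- A weight on `ℂⁿ`: nonnegative and locally integrable. -/
def IsWeight {n : ℕ} (w : Cn n → ℝ) : Prop :=
  (∀ z, 0 ≤ w z) ∧ LocallyIntegrable w volume

/-- `w(E) = ∫_E w dv`, as an extended nonnegative real. -/
def wMeas {n : ℕ} (w : Cn n → ℝ) (E : Set (Cn n)) : ℝ≥0∞ :=
  ∫⁻ u in E, ENNReal.ofReal (w u)

/-- Average of a nonnegative function over the cube `Q_r(z)`. -/
def cubeAvg {n : ℕ} (r : ℝ) (z : Cn n) (g : Cn n → ℝ) : ℝ≥0∞ :=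
  (volume (cube r z))⁻¹ * ∫⁻ u in cube r z, ENNReal.ofReal (g u)

/-- The norm of the weighted space `L^p_{α,w}`:
`‖f‖ = (∫ |f(z)|^p e^{-pα|z|²/2} w(z) dv(z))^{1/p}`. -/
def wNorm {n : ℕ} (α p : ℝ) (w : Cn n → ℝ) (f : Cn n → ℂ) : ℝ≥0∞ :=
  (∫⁻ z, ENNReal.ofReal ‖f z‖ ^ p *
    ENNReal.ofReal (Real.exp (-(p * α / 2) * ‖z‖ ^ 2) * w z)) ^ (1 / p)

/-- Membership in `L^p_{α,w}`. -/
def MemLpw {n : ℕ} (α p : ℝ) (w : Cn n → ℝ) (f : Cn n → ℂ) : Prop :=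
  AEStronglyMeasurable f volume ∧ wNorm α p w f < ⊤

/-- Membership in the weighted Fock space `F^p_{α,w}`: entire with finite norm. -/
def MemFock {n : ℕ} (α p : ℝ) (w : Cn n → ℝ) (f : Cn n → ℂ) : Prop :=
  Differentiable ℂ f ∧ wNorm α p w f < ⊤

/-- The restricted `A_p` characteristic `[w]_{A_{p,r}}` (for `1 < p < ∞`),
with `p' = p/(p-1)` the conjugate exponent. -/
def apCharacteristic {n : ℕ} (p r : ℝ) (w : Cn n → ℝ) : ℝ≥0∞ :=
  ⨆ z : Cn n,
    cubeAvg r z w * (cubeAvg r z fun u => w u ^ (-((p / (p - 1)) / p))) ^ (p / (p / (p - 1)))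

/-- The restricted `A_p` class (`1 < p < ∞`). -/
def ResAp {n : ℕ} (p : ℝ) (w : Cn n → ℝ) : Prop :=
  ∀ r > 0, apCharacteristic p r w < ⊤

/-- `w` is `r`-doubling with constant `C₀`. -/
def IsDoublingWith {n : ℕ} (r : ℝ) (w : Cn n → ℝ) (C₀ : ℝ) : Prop :=
  1 ≤ C₀ ∧ ∀ z : Cn n, wMeas w (cube (2 * r) z) ≤ ENNReal.ofReal C₀ * wMeas w (cube r z)

/-- `w` is `r`-doubling. -/
def IsDoubling {n : ℕ} (r : ℝ) (w : Cn n → ℝ) : Prop := ∃ C₀, IsDoublingWith r w C₀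

/-- The Fock reproducing kernel `K_z(u) = e^{α⟨u,z⟩}`. -/
def Kz {n : ℕ} (α : ℝ) (z : Cn n) : Cn n → ℂ := fun u => Complex.exp (α * pInner u z)

/-- The normalized reproducing kernel `k_z(u) = e^{α⟨u,z⟩ - α|z|²/2}`. -/
def kz {n : ℕ} (α : ℝ) (z : Cn n) : Cn n → ℂ :=
  fun u => Complex.exp (α * pInner u z - α * ‖z‖ ^ 2 / 2)

/-- The pairing `⟨f,g⟩_α = ∫ f conj(g) dλ_α`. -/
def pairing {n : ℕ} (α : ℝ) (f g : Cn n → ℂ) : ℂ :=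
  (α / Real.pi) ^ n * ∫ u, f u * (starRingEnd ℂ) (g u) * Real.exp (-α * ‖u‖ ^ 2)

/-- The Fock projection `P_α f(z) = (α/π)^n ∫ f(u) e^{α⟨z,u⟩ - α|u|²} dv(u)`. -/
def fockProj {n : ℕ} (α : ℝ) (f : Cn n → ℂ) (z : Cn n) : ℂ :=
  (α / Real.pi) ^ n * ∫ u, f u * Complex.exp (α * pInner z u - α * ‖u‖ ^ 2)

/-- The Toeplitz operator `T_φ f(z) = (α/π)^n ∫ φ(u) f(u) e^{α⟨z,u⟩ - α|u|²} dv(u)`. -/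
def toeplitz {n : ℕ} (α : ℝ) (φ f : Cn n → ℂ) (z : Cn n) : ℂ :=
  (α / Real.pi) ^ n * ∫ u, φ u * f u * Complex.exp (α * pInner z u - α * ‖u‖ ^ 2)

/-- The `(p,w)`-normalized reproducing kernel `k_z^{(p,w)} = K_z / ‖K_z‖_{F^p_{α,w}}`. -/
def kpw {n : ℕ} (α p : ℝ) (w : Cn n → ℝ) (z : Cn n) : Cn n → ℂ :=
  fun u => Kz α z u / ((wNorm α p w (Kz α z)).toReal : ℂ)

/-- The dual weight `w' = w^{-p'/p}`. -/
def dualWeight {n : ℕ} (p : ℝ) (w : Cn n → ℝ) : Cn n → ℝ :=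
  fun u => w u ^ (-((p / (p - 1)) / p))

/-- `|⟨T k_z^{(p,w)}, k_u^{(p',w')}⟩_α|` as an extended nonnegative real. -/
def wlKernel {n : ℕ} (α p : ℝ) (w : Cn n → ℝ) (T : (Cn n → ℂ) → Cn n → ℂ)
    (z u : Cn n) : ℝ≥0∞ :=
  ENNReal.ofReal ‖pairing α (T (kpw α p w z)) (kpw α (p / (p - 1)) (dualWeight p w) u)‖

/-- `T` maps `F^p_{α,w}` into itself and is bounded there with constant `C`. -/
def FockBoundedWith {n : ℕ} (α p : ℝ) (w : Cn n → ℝ)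
    (T : (Cn n → ℂ) → Cn n → ℂ) (C : ℝ) : Prop :=
  ∀ f, MemFock α p w f →
    MemFock α p w (T f) ∧ wNorm α p w (T f) ≤ ENNReal.ofReal C * wNorm α p w f

/-- `T` is a bounded operator on `F^p_{α,w}`. -/
def FockBounded {n : ℕ} (α p : ℝ) (w : Cn n → ℝ) (T : (Cn n → ℂ) → Cn n → ℂ) : Prop :=
  ∃ C > 0, FockBoundedWith α p w T C

/-- `T` is weakly localized on `F^p_{α,w}`. -/
def WeaklyLocalized {n : ℕ} (α p : ℝ) (w : Cn n → ℝ)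
    (T : (Cn n → ℂ) → Cn n → ℂ) : Prop :=
  FockBounded α p w T ∧
  (⨆ z : Cn n, ∫⁻ u, wlKernel α p w T z u) < ⊤ ∧
  (⨆ u : Cn n, ∫⁻ z, wlKernel α p w T z u) < ⊤ ∧
  Tendsto (fun r : ℝ => ⨆ z : Cn n, ∫⁻ u in (Metric.ball z r)ᶜ, wlKernel α p w T z u)
    atTop (𝓝 0) ∧
  Tendsto (fun r : ℝ => ⨆ u : Cn n, ∫⁻ z in (Metric.ball u r)ᶜ, wlKernel α p w T z u)
    atTop (𝓝 0)

/-- A set of functions is totally bounded with respect to the pseudometric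
`d(f,g) = ‖f - g‖_{L^p_{α,w}}`. -/
def TotallyBddW {n : ℕ} (α p : ℝ) (w : Cn n → ℝ) (S : Set (Cn n → ℂ)) : Prop :=
  ∀ ε > (0 : ℝ), ∃ G : Set (Cn n → ℂ), G.Finite ∧
    ∀ f ∈ S, ∃ g ∈ G, wNorm α p w (f - g) < ENNReal.ofReal ε

/-- `T` is a compact operator on `F^p_{α,w}`: the image of the closed unit ball is
totally bounded. -/
def FockCompact {n : ℕ} (α p : ℝ) (w : Cn n → ℝ) (T : (Cn n → ℂ) → Cn n → ℂ) : Prop :=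
  TotallyBddW α p w {h | ∃ f, MemFock α p w f ∧ wNorm α p w f ≤ 1 ∧ h = T f}

/-- `ŵ(z) = w(Q_1(z))`. -/
def hatW {n : ℕ} (w : Cn n → ℝ) (z : Cn n) : ℝ := (wMeas w (cube 1 z)).toReal

/-- The Berezin transform `T̃(z) = ⟨T k_z, k_z⟩_α`. -/
def berezin {n : ℕ} (α : ℝ) (T : (Cn n → ℂ) → Cn n → ℂ) (z : Cn n) : ℂ :=
  pairing α (T (kz α z)) (kz α z)

/-- Iterated product of Toeplitz operators over a list of symbols. -/
def toeplitzList {n : ℕ} (α : ℝ) : List (Cn n → ℂ) → (Cn n → ℂ) → Cn n → ℂ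
  | [], f => f
  | φ :: rest, f => toeplitz α φ (toeplitzList α rest f)

/-- The joint `A_{p,r}` characteristic `[w,σ]_{A_{p,r}}` (for `p = 1` via the essential
supremum of `σ⁻¹`, for `p > 1` via the dual exponent `p' = p/(p-1)`). -/
def jointAp {n : ℕ} (p r : ℝ) (w σ : Cn n → ℝ) : ℝ≥0∞ :=
  if p = 1 then
    ⨆ z : Cn n, cubeAvg r z w *
      essSup (fun u => (ENNReal.ofReal (σ u))⁻¹) (volume.restrict (cube r z))
  else
    ⨆ z : Cn n, cubeAvg r z w *
      (cubeAvg r z fun u => σ u ^ (-((p / (p - 1)) / p))) ^ (p / (p / (p - 1)))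

/-- `P_α : L^p_{α,σ} → L^p_{α,w}` is bounded with constant `B`: for every
`f ∈ L^p_{α,σ}` the defining integral converges absolutely for a.e. `z` and
`‖P_α f‖_{L^p_{α,w}} ≤ B ‖f‖_{L^p_{α,σ}}`. -/
def FockProjBoundedWith {n : ℕ} (α p : ℝ) (σ w : Cn n → ℝ) (B : ℝ) : Prop :=
  ∀ f, MemLpw α p σ f →
    (∀ᵐ z : Cn n, Integrable (fun u => f u * Complex.exp (α * pInner z u - α * ‖u‖ ^ 2))) ∧
    wNorm α p w (fockProj α f) ≤ ENNReal.ofReal B * wNorm α p σ f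

/-- `T_φ` is bounded on `L^p_{α,w}` with constant `C`: for every `f ∈ L^p_{α,w}` the
defining integral converges absolutely for a.e. `z` and the norm inequality holds. -/
def ToeplitzBoundedWith {n : ℕ} (α p : ℝ) (w : Cn n → ℝ) (φ : Cn n → ℂ) (C : ℝ) : Prop :=
  ∀ f, MemLpw α p w f →
    (∀ᵐ z : Cn n,
      Integrable (fun u => φ u * f u * Complex.exp (α * pInner z u - α * ‖u‖ ^ 2))) ∧
    wNorm α p w (toeplitz α φ f) ≤ ENNReal.ofReal C * wNorm α p w f

/-- The rank-one operator `T_φ^{(u,r)} f = χ_{Q_r(u)} k_u ∫_{Q_r(u)} φ f conj(k_u) dλ_α`. -/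
def toeplitzCut {n : ℕ} (α r : ℝ) (u : Cn n) (φ f : Cn n → ℂ) : Cn n → ℂ := fun z =>
  (cube r u).indicator (kz α u) z *
    ∫ ξ in cube r u,
      φ ξ * f ξ * (starRingEnd ℂ) (kz α u ξ) * ((α / Real.pi) ^ n * Real.exp (-α * ‖ξ‖ ^ 2))

section AuxLemmas

variable {n : ℕ}

lemma pInner_eq_conj_inner (z u : Cn n) : pInner z u = (starRingEnd ℂ) (inner ℂ z u) := by
  simp only [pInner, PiLp.inner_apply, RCLike.inner_apply, map_sum, map_mul,
    RingHom.id_apply, starRingEnd_self_apply]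
  exact Finset.sum_congr rfl fun _ _ => mul_comm _ _

lemma pInner_re (z u : Cn n) : (pInner z u).re = (‖z‖^2 + ‖u‖^2 - ‖z - u‖^2)/2 := by
  have h1 : (pInner z u).re = inner ℝ z u := by
    rw [pInner_eq_conj_inner, real_inner_eq_re_inner (𝕜 := ℂ)]
    simp [Complex.conj_re]
    exact inner_re_symm (𝕜 := ℂ) _ _
  have h2 := norm_sub_sq_real z u
  rw [h1]; linarith

lemma isOpen_cube (r : ℝ) (z : Cn n) : IsOpen (cube r z) := by
  have : cube r z = ⋂ j, ((fun u : Cn n => u j) ⁻¹'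
      {c : ℂ | |(c - z j).re| < r/2 ∧ |(c - z j).im| < r/2}) := by
    ext u; simp [cube, Set.mem_iInter]
  rw [this]
  refine isOpen_iInter_of_finite fun j => ?_
  have hc : Continuous fun u : Cn n => u j := (EuclideanSpace.proj (𝕜 := ℂ) j).continuous
  refine IsOpen.preimage hc ?_
  refine IsOpen.inter ?_ ?_
  · exact isOpen_lt (continuous_abs.comp (Complex.continuous_re.comp
      (continuous_id.sub continuous_const))) continuous_const
  · exact isOpen_lt (continuous_abs.comp (Complex.continuous_im.comp
      (continuous_id.sub continuous_const))) continuous_const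

lemma cube_subset_closedBall {r : ℝ} (hr : 0 ≤ r) (z : Cn n) :
    cube r z ⊆ Metric.closedBall z (r * Real.sqrt n) := by
  intro u hu
  rw [Metric.mem_closedBall, dist_eq_norm]
  have key : ∀ j, ‖(u - z) j‖^2 ≤ r^2 := by
    intro j
    obtain ⟨h1, h2⟩ := hu j
    have hj : (u - z) j = u j - z j := by simp
    rw [hj, ← Complex.normSq_eq_norm_sq, Complex.normSq_apply]
    nlinarith [abs_nonneg (u j - z j).re, abs_nonneg (u j - z j).im,
      sq_abs (u j - z j).re, sq_abs (u j - z j).im]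
  rw [EuclideanSpace.norm_eq]
  have h1 : (∑ j, ‖(u - z) j‖^2) ≤ (n : ℝ) * r^2 := by
    calc (∑ j, ‖(u - z) j‖^2) ≤ ∑ _j : Fin n, r^2 := Finset.sum_le_sum fun j _ => key j
    _ = (n : ℝ) * r^2 := by simp [mul_comm]
  calc Real.sqrt (∑ j, ‖(u - z) j‖^2) ≤ Real.sqrt ((n : ℝ) * r^2) := Real.sqrt_le_sqrt h1
  _ = r * Real.sqrt n := by
      rw [show (n : ℝ) * r^2 = (r * Real.sqrt n)^2 by
        rw [mul_pow, Real.sq_sqrt (by positivity)]; ring]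
      exact Real.sqrt_sq (by positivity)

lemma dist_le_of_mem_cube {r : ℝ} (hr : 0 ≤ r) {z₀ z u : Cn n}
    (hz : z ∈ cube r z₀) (hu : u ∈ cube r z₀) : ‖z - u‖ ≤ 2 * (r * Real.sqrt n) := by
  have h1 := cube_subset_closedBall hr z₀ hz
  have h2 := cube_subset_closedBall hr z₀ hu
  rw [Metric.mem_closedBall] at h1 h2
  rw [← dist_eq_norm]
  calc dist z u ≤ dist z z₀ + dist z₀ u := dist_triangle z z₀ u
  _ ≤ r * Real.sqrt n + r * Real.sqrt n := by
      rw [dist_comm z₀ u] at *; exact add_le_add h1 h2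
  _ = 2 * (r * Real.sqrt n) := by ring

lemma volume_cube_eq (r : ℝ) (z : Cn n) :
    volume (cube r z) = volume (cube r (0 : Cn n)) := by
  have : cube r z = (fun u : Cn n => -z + u) ⁻¹' (cube r (0 : Cn n)) := by
    ext u
    simp only [cube, Set.mem_preimage, Set.mem_setOf_eq]
    constructor <;> intro h j <;>
      · have := h j
        simpa [sub_eq_neg_add] using this
  rw [this, measure_preimage_add]

lemma measurableSet_cube (r : ℝ) (z : Cn n) : MeasurableSet (cube r z) :=
  (isOpen_cube r z).measurableSet

end AuxLemmas
section AuxLemmas2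

variable {n : ℕ}

/-- The reduced kernel `H(z,u) = e^{α⟨z,u⟩ - α|u|²/2 - α|z|²/2}`. -/
def Hker (α : ℝ) (z u : Cn n) : ℂ :=
  Complex.exp (↑α * pInner z u - Complex.ofReal (α * ‖u‖^2/2) - Complex.ofReal (α * ‖z‖^2/2))

lemma continuous_pInner2 : Continuous (fun p : Cn n × Cn n => pInner p.1 p.2) := by
  unfold pInner
  refine continuous_finset_sum _ fun j _ => ?_
  exact ((EuclideanSpace.proj (𝕜 := ℂ) j).continuous.comp continuous_fst).mul
    (continuous_star.comp ((EuclideanSpace.proj (𝕜 := ℂ) j).continuous.comp continuous_snd))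

lemma continuous_Hker (α : ℝ) : Continuous (fun p : Cn n × Cn n => Hker α p.1 p.2) := by
  unfold Hker
  apply Complex.continuous_exp.comp
  refine Continuous.sub (Continuous.sub ?_ ?_) ?_
  · exact continuous_const.mul continuous_pInner2
  · exact Complex.continuous_ofReal.comp (by fun_prop)
  · exact Complex.continuous_ofReal.comp (by fun_prop)

lemma norm_Hker (α : ℝ) (z u : Cn n) :
    ‖Hker α z u‖ = Real.exp (-(α/2) * ‖z - u‖^2) := by
  unfold Hker
  rw [Complex.norm_exp]
  congr 1
  have h := pInner_re z u
  simp only [Complex.sub_re, Complex.ofReal_re, Complex.mul_re, Complex.ofReal_im,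
    zero_mul, sub_zero]
  rw [h]; ring

lemma norm_Hker_le_one {α : ℝ} (hα : 0 ≤ α) (z u : Cn n) : ‖Hker α z u‖ ≤ 1 := by
  rw [norm_Hker]
  rw [Real.exp_le_one_iff]
  have : 0 ≤ ‖z - u‖^2 := by positivity
  nlinarith

lemma toeplitz_indicator (α : ℝ) (φ : Cn n → ℂ) (u₀ : Cn n) (δ : ℝ) (z : Cn n) :
    toeplitz α φ ((Metric.closedBall u₀ δ).indicator
        fun ξ => ((Real.exp (α/2 * ‖ξ‖^2) : ℝ) : ℂ)) z
      = (α/Real.pi)^n * (((Real.exp (α/2 * ‖z‖^2) : ℝ) : ℂ)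
        * ∫ ξ in Metric.closedBall u₀ δ, φ ξ * Hker α z ξ) := by
  rw [toeplitz]
  have hrw : (fun u : Cn n => φ u * ((Metric.closedBall u₀ δ).indicator
        (fun ξ => ((Real.exp (α/2 * ‖ξ‖^2) : ℝ) : ℂ)) u)
        * Complex.exp (↑α * pInner z u - ↑α * (↑‖u‖:ℂ)^2))
      = fun u : Cn n => (Metric.closedBall u₀ δ).indicator
        (fun ξ => ((Real.exp (α/2 * ‖z‖^2) : ℝ) : ℂ) * (φ ξ * Hker α z ξ)) u := by
    funext u
    by_cases hu : u ∈ Metric.closedBall u₀ δ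
    · rw [Set.indicator_of_mem hu, Set.indicator_of_mem hu]
      have hexp : ((Real.exp (α/2 * ‖u‖^2) : ℝ) : ℂ)
            * Complex.exp (↑α * pInner z u - ↑α * (↑‖u‖:ℂ)^2)
          = ((Real.exp (α/2 * ‖z‖^2) : ℝ) : ℂ) * Hker α z u := by
        simp only [Hker]
        rw [Complex.ofReal_exp, Complex.ofReal_exp, ← Complex.exp_add, ← Complex.exp_add]
        congr 1
        push_cast
        ring
      calc φ u * ((Real.exp (α/2 * ‖u‖^2) : ℝ) : ℂ)
            * Complex.exp (↑α * pInner z u - ↑α * (↑‖u‖:ℂ)^2)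
          = φ u * (((Real.exp (α/2 * ‖u‖^2) : ℝ) : ℂ)
            * Complex.exp (↑α * pInner z u - ↑α * (↑‖u‖:ℂ)^2)) := by ring
        _ = φ u * (((Real.exp (α/2 * ‖z‖^2) : ℝ) : ℂ) * Hker α z u) := by rw [hexp]
        _ = ((Real.exp (α/2 * ‖z‖^2) : ℝ) : ℂ) * (φ u * Hker α z u) := by ring
    · rw [Set.indicator_of_notMem hu, Set.indicator_of_notMem hu]
      ring
  rw [hrw, integral_indicator measurableSet_closedBall, integral_const_mul]

lemma wNorm_one_indicator (α : ℝ) (w : Cn n → ℝ) (hw : IsWeight w) (u₀ : Cn n) (δ : ℝ) :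
    wNorm α 1 w ((Metric.closedBall u₀ δ).indicator
        fun ξ => ((Real.exp (α/2 * ‖ξ‖^2) : ℝ) : ℂ))
      = wMeas w (Metric.closedBall u₀ δ) := by
  rw [wNorm]
  rw [show (1:ℝ)/1 = 1 by norm_num, ENNReal.rpow_one]
  have hpt : ∀ z : Cn n, ENNReal.ofReal ‖(Metric.closedBall u₀ δ).indicator
        (fun ξ => ((Real.exp (α/2 * ‖ξ‖^2) : ℝ) : ℂ)) z‖ ^ (1:ℝ)
        * ENNReal.ofReal (Real.exp (-(1 * α / 2) * ‖z‖^2) * w z)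
      = (Metric.closedBall u₀ δ).indicator (fun z => ENNReal.ofReal (w z)) z := by
    intro z
    rw [ENNReal.rpow_one]
    by_cases hz : z ∈ Metric.closedBall u₀ δ
    · rw [Set.indicator_of_mem hz, Set.indicator_of_mem hz]
      rw [Complex.norm_real, Real.norm_eq_abs, abs_of_pos (Real.exp_pos _)]
      rw [← ENNReal.ofReal_mul (Real.exp_pos _).le]
      congr 1
      rw [← mul_assoc, ← Real.exp_add]
      rw [show α/2 * ‖z‖^2 + -(1 * α / 2) * ‖z‖^2 = 0 by ring, Real.exp_zero, one_mul]
    · rw [Set.indicator_of_notMem hz, Set.indicator_of_notMem hz]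
      simp
  simp_rw [hpt]
  rw [lintegral_indicator measurableSet_closedBall]
  rfl

lemma wMeas_lt_top {w : Cn n → ℝ} (hw : IsWeight w) {s : Set (Cn n)}
    (hs : Bornology.IsBounded s) : wMeas w s < ⊤ := by
  obtain ⟨R, hR⟩ : ∃ R, s ⊆ Metric.closedBall 0 R := hs.subset_closedBall 0
  have hint : IntegrableOn w (Metric.closedBall (0:Cn n) R) volume :=
    hw.2.integrableOn_isCompact (isCompact_closedBall _ _)
  have h1 : wMeas w s ≤ wMeas w (Metric.closedBall (0:Cn n) R) :=
    lintegral_mono_set hR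
  refine h1.trans_lt ?_
  have h2 : wMeas w (Metric.closedBall (0:Cn n) R)
      ≤ ∫⁻ u in Metric.closedBall (0:Cn n) R, (‖w u‖₊ : ℝ≥0∞) := by
    refine lintegral_mono fun u => ?_
    rw [← enorm_eq_nnnorm, ← ofReal_norm, Real.norm_eq_abs]
    exact ENNReal.ofReal_le_ofReal (le_abs_self _)
  exact h2.trans_lt hint.2

lemma wMeas_eq_ofReal_integral {w : Cn n → ℝ} (hw : IsWeight w) {s : Set (Cn n)}
    (hint : IntegrableOn w s volume) :
    wMeas w s = ENNReal.ofReal (∫ u in s, w u) := by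
  rw [wMeas, ← ofReal_integral_eq_lintegral_ofReal hint (ae_of_all _ fun u => hw.1 u)]

end AuxLemmas2
set_option maxHeartbeats 1000000 in
lemma per_delta_estimate {n : ℕ} {α : ℝ} (hα : 0 < α) {φ : Cn n → ℂ}
    (hφm : AEStronglyMeasurable φ volume) {K : ℝ} (hK0 : 0 ≤ K)
    (hKbd : ∀ᵐ ξ : Cn n, ‖φ ξ‖ ≤ K)
    {w : Cn n → ℝ} (hw : IsWeight w) {C : ℝ} (hC : 0 < C)
    (hbdd : ToeplitzBoundedWith α 1 w φ C)
    {r : ℝ} (hr : 0 < r) {z₀ u₀ : Cn n} (hu₀Q : u₀ ∈ cube r z₀)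
    {ε δ : ℝ} (hεpos : 0 < ε) (hδpos : 0 < δ)
    (hUC : ∀ z ∈ Metric.closedBall z₀ (r * Real.sqrt n), ∀ ξ ∈ Metric.closedBall u₀ δ,
        ‖Hker α z ξ - Hker α z u₀‖ ≤ ε) :
    (α / Real.pi) ^ n * (Real.exp (-(α/2) * (2 * (r * Real.sqrt n))^2) * ‖φ u₀‖
        - (⨍ ξ in Metric.closedBall u₀ δ, ‖φ ξ - φ u₀‖) - ε * ‖φ u₀‖)
      * (wMeas w (cube r z₀)).toReal
      ≤ C * ⨍ ξ in Metric.closedBall u₀ δ, w ξ := by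
  have hπ := Real.pi_pos
  set B := Metric.closedBall u₀ δ with hB_def
  set c : ℝ := (α / Real.pi) ^ n with hc_def
  have hc : 0 < c := by positivity
  set κ : ℝ := Real.exp (-(α/2) * (2 * (r * Real.sqrt n))^2) with hκ_def
  have hκ : 0 < κ := Real.exp_pos _
  set Aδ : ℝ := ⨍ ξ in B, ‖φ ξ - φ u₀‖ with hAδ_def
  set W : ℝ := (wMeas w (cube r z₀)).toReal with hW_def
  have hW0 : 0 ≤ W := ENNReal.toReal_nonneg
  set S : ℝ := κ * ‖φ u₀‖ - Aδ - ε * ‖φ u₀‖ with hS_def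
  have hBmeas : MeasurableSet B := measurableSet_closedBall
  have hvB0 : volume B ≠ 0 := (Metric.measure_closedBall_pos volume u₀ hδpos).ne'
  have hvBtop : volume B ≠ ⊤ := measure_closedBall_lt_top.ne
  set vB : ℝ := (volume B).toReal with hvB_def
  have hvBpos : 0 < vB := ENNReal.toReal_pos hvB0 hvBtop
  have hwB : IntegrableOn w B volume := hw.2.integrableOn_isCompact (isCompact_closedBall _ _)
  have hintw_nonneg : (0:ℝ) ≤ ∫ ξ in B, w ξ := setIntegral_nonneg hBmeas fun ξ _ => hw.1 ξ
  have havgw : (⨍ ξ in B, w ξ) = vB⁻¹ * ∫ ξ in B, w ξ := by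
    rw [setAverage_eq, smul_eq_mul, hvB_def, measureReal_def]
  have havgw_nonneg : 0 ≤ ⨍ ξ in B, w ξ := by rw [havgw]; positivity
  by_cases hSle : S ≤ 0
  · have h1 : c * S * W ≤ 0 :=
      mul_nonpos_of_nonpos_of_nonneg (mul_nonpos_of_nonneg_of_nonpos hc.le hSle) hW0
    exact h1.trans (mul_nonneg hC.le havgw_nonneg)
  push_neg at hSle
  -- the test function
  have hfm : AEStronglyMeasurable
      (B.indicator fun ξ : Cn n => ((Real.exp (α/2 * ‖ξ‖^2) : ℝ) : ℂ)) volume := by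
    refine AEStronglyMeasurable.indicator ?_ hBmeas
    exact (Complex.continuous_ofReal.comp (by fun_prop)).aestronglyMeasurable
  have hfmem : MemLpw α 1 w
      (B.indicator fun ξ : Cn n => ((Real.exp (α/2 * ‖ξ‖^2) : ℝ) : ℂ)) := by
    refine ⟨hfm, ?_⟩
    rw [hB_def, wNorm_one_indicator α w hw, ← hB_def]
    exact wMeas_lt_top hw Metric.isBounded_closedBall
  have hTb := (hbdd _ hfmem).2
  rw [hB_def, wNorm_one_indicator α w hw, ← hB_def] at hTb
  -- integrability facts
  have hint1 : ∀ z : Cn n, IntegrableOn (fun ξ => φ ξ * Hker α z ξ) B volume := by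
    intro z
    apply Measure.integrableOn_of_bounded (M := K) hvBtop
    · exact hφm.mul ((continuous_Hker α).comp (Continuous.prodMk_right z)).aestronglyMeasurable
    · filter_upwards [ae_restrict_of_ae hKbd] with ξ hξ
      rw [norm_mul]
      calc ‖φ ξ‖ * ‖Hker α z ξ‖ ≤ K * 1 :=
          mul_le_mul hξ (norm_Hker_le_one hα.le z ξ) (norm_nonneg _) hK0
        _ = K := mul_one K
  have hintφ : IntegrableOn (fun ξ => ‖φ ξ - φ u₀‖) B volume := by
    have hφB : IntegrableOn φ B volume := by
      apply Measure.integrableOn_of_bounded (M := K) hvBtop hφm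
      filter_upwards [ae_restrict_of_ae hKbd] with ξ hξ using hξ
    exact (hφB.sub (integrableOn_const hvBtop)).norm
  -- pointwise lower bound on the cube
  have hlow : ∀ z ∈ cube r z₀, c * Real.exp (α/2 * ‖z‖^2) * (vB * S)
      ≤ ‖toeplitz α φ (B.indicator fun ξ : Cn n => ((Real.exp (α/2 * ‖ξ‖^2) : ℝ) : ℂ)) z‖ := by
    intro z hz
    have hzball : z ∈ Metric.closedBall z₀ (r * Real.sqrt n) := cube_subset_closedBall hr.le z₀ hz
    rw [hB_def, toeplitz_indicator α φ u₀ δ z, ← hB_def]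
    rw [norm_mul, norm_mul]
    have hns : ‖((α:ℂ) / (Real.pi:ℂ))^n‖ = c := by
      rw [norm_pow, norm_div, Complex.norm_real, Complex.norm_real, Real.norm_eq_abs,
        Real.norm_eq_abs, abs_of_pos hα, abs_of_pos hπ]
    have hn2 : ‖(((Real.exp (α/2 * ‖z‖^2)) : ℝ) : ℂ)‖ = Real.exp (α/2 * ‖z‖^2) := by
      rw [Complex.norm_real, Real.norm_eq_abs, abs_of_pos (Real.exp_pos _)]
    rw [hns, hn2]
    have hI : vB * S ≤ ‖∫ ξ in B, φ ξ * Hker α z ξ‖ := by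
      have hIint := hint1 z
      have hconst : IntegrableOn (fun _ : Cn n => φ u₀ * Hker α z u₀) B volume :=
        integrableOn_const hvBtop
      have hsplit : (∫ ξ in B, φ ξ * Hker α z ξ)
          = (vB • (φ u₀ * Hker α z u₀)
            + ∫ ξ in B, (φ ξ * Hker α z ξ - φ u₀ * Hker α z u₀)) := by
        rw [integral_sub hIint hconst, setIntegral_const, measureReal_def, ← hvB_def]
        abel
      have herr : ‖∫ ξ in B, (φ ξ * Hker α z ξ - φ u₀ * Hker α z u₀)‖
          ≤ vB * Aδ + vB * (ε * ‖φ u₀‖) := by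
        calc ‖∫ ξ in B, (φ ξ * Hker α z ξ - φ u₀ * Hker α z u₀)‖
            ≤ ∫ ξ in B, ‖φ ξ * Hker α z ξ - φ u₀ * Hker α z u₀‖ :=
              norm_integral_le_integral_norm _
          _ ≤ ∫ ξ in B, (‖φ ξ - φ u₀‖ + ε * ‖φ u₀‖) := by
              refine setIntegral_mono_on ((hIint.sub hconst).norm)
                (hintφ.add (integrableOn_const hvBtop)) hBmeas ?_
              intro ξ hξ
              calc ‖φ ξ * Hker α z ξ - φ u₀ * Hker α z u₀‖
                  = ‖(φ ξ - φ u₀) * Hker α z ξ + φ u₀ * (Hker α z ξ - Hker α z u₀)‖ := by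
                    congr 1; ring
                _ ≤ ‖(φ ξ - φ u₀) * Hker α z ξ‖ + ‖φ u₀ * (Hker α z ξ - Hker α z u₀)‖ :=
                    norm_add_le _ _
                _ ≤ ‖φ ξ - φ u₀‖ * 1 + ‖φ u₀‖ * ε := by
                    rw [norm_mul, norm_mul]
                    exact add_le_add
                      (mul_le_mul_of_nonneg_left (norm_Hker_le_one hα.le z ξ) (norm_nonneg _))
                      (mul_le_mul_of_nonneg_left (hUC z hzball ξ hξ) (norm_nonneg _))
                _ = ‖φ ξ - φ u₀‖ + ε * ‖φ u₀‖ := by ring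
          _ = (∫ ξ in B, ‖φ ξ - φ u₀‖) + vB * (ε * ‖φ u₀‖) := by
              rw [integral_add hintφ (integrableOn_const hvBtop),
                setIntegral_const, smul_eq_mul, measureReal_def, ← hvB_def]
          _ = vB * Aδ + vB * (ε * ‖φ u₀‖) := by
              have hABel : (∫ ξ in B, ‖φ ξ - φ u₀‖) = vB * Aδ := by
                rw [hAδ_def, setAverage_eq, smul_eq_mul, measureReal_def, ← hvB_def, ← mul_assoc,
                  mul_inv_cancel₀ hvBpos.ne', one_mul]
              rw [hABel]
      have hmain : vB * (κ * ‖φ u₀‖) ≤ ‖vB • (φ u₀ * Hker α z u₀)‖ := by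
        rw [norm_smul, Real.norm_eq_abs, abs_of_pos hvBpos, norm_mul]
        refine mul_le_mul_of_nonneg_left ?_ hvBpos.le
        rw [mul_comm]
        refine mul_le_mul_of_nonneg_left ?_ (norm_nonneg (φ u₀))
        rw [norm_Hker, hκ_def]
        apply Real.exp_le_exp.2
        have hd : ‖z - u₀‖ ≤ 2 * (r * Real.sqrt n) := dist_le_of_mem_cube hr.le hz hu₀Q
        have hd2 : ‖z - u₀‖^2 ≤ (2 * (r * Real.sqrt n))^2 :=
          pow_le_pow_left₀ (norm_nonneg _) hd 2
        nlinarith [hα.le]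
      calc vB * S = vB * (κ * ‖φ u₀‖) - (vB * Aδ + vB * (ε * ‖φ u₀‖)) := by
            rw [hS_def]; ring
        _ ≤ ‖vB • (φ u₀ * Hker α z u₀)‖
            - ‖∫ ξ in B, (φ ξ * Hker α z ξ - φ u₀ * Hker α z u₀)‖ := sub_le_sub hmain herr
        _ ≤ ‖∫ ξ in B, φ ξ * Hker α z ξ‖ := by
            have h := norm_sub_norm_le (vB • (φ u₀ * Hker α z u₀))
              (-(∫ ξ in B, (φ ξ * Hker α z ξ - φ u₀ * Hker α z u₀)))
            rw [norm_neg, sub_neg_eq_add, ← hsplit] at h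
            exact h
    calc c * Real.exp (α/2 * ‖z‖^2) * (vB * S)
        ≤ c * Real.exp (α/2 * ‖z‖^2) * ‖∫ ξ in B, φ ξ * Hker α z ξ‖ :=
          mul_le_mul_of_nonneg_left hI (by positivity)
      _ = c * (Real.exp (α/2 * ‖z‖^2) * ‖∫ ξ in B, φ ξ * Hker α z ξ‖) := by ring
  -- lower bound for the weighted norm of the Toeplitz image
  have hTlow : ENNReal.ofReal (c * (vB * S)) * wMeas w (cube r z₀)
      ≤ wNorm α 1 w (toeplitz α φ
        (B.indicator fun ξ : Cn n => ((Real.exp (α/2 * ‖ξ‖^2) : ℝ) : ℂ))) := by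
    rw [wNorm, show (1:ℝ)/1 = 1 by norm_num, ENNReal.rpow_one]
    have step1 : ENNReal.ofReal (c * (vB * S)) * wMeas w (cube r z₀)
        = ∫⁻ z in cube r z₀, ENNReal.ofReal (c * (vB * S)) * ENNReal.ofReal (w z) := by
      rw [lintegral_const_mul' _ _ ENNReal.ofReal_ne_top]
      rfl
    rw [step1]
    refine le_trans ?_ (setLIntegral_le_lintegral (cube r z₀) _)
    refine lintegral_mono_ae ?_
    refine (ae_restrict_iff' (measurableSet_cube r z₀)).2 (ae_of_all _ fun z hz => ?_)
    rw [ENNReal.rpow_one]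
    have hl := hlow z hz
    have hwz : 0 ≤ w z := hw.1 z
    rw [← ENNReal.ofReal_mul (by positivity : (0:ℝ) ≤ c * (vB * S)),
      ← ENNReal.ofReal_mul (norm_nonneg _)]
    apply ENNReal.ofReal_le_ofReal
    have hexp : Real.exp (α/2 * ‖z‖^2) * Real.exp (-(1 * α / 2) * ‖z‖^2) = 1 := by
      rw [← Real.exp_add, show α/2 * ‖z‖^2 + -(1*α/2) * ‖z‖^2 = 0 by ring, Real.exp_zero]
    have h2 : c * (vB * S) * w z
        = (c * Real.exp (α/2 * ‖z‖^2) * (vB * S)) * (Real.exp (-(1*α/2) * ‖z‖^2) * w z) := by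
      have h3 : (c * Real.exp (α/2 * ‖z‖^2) * (vB * S)) * (Real.exp (-(1*α/2) * ‖z‖^2) * w z)
          = c * (vB * S) * w z * (Real.exp (α/2 * ‖z‖^2) * Real.exp (-(1*α/2) * ‖z‖^2)) := by
        ring
      rw [h3, hexp, mul_one]
    rw [h2]
    exact mul_le_mul_of_nonneg_right hl (mul_nonneg (Real.exp_pos _).le hwz)
  have hcomb := hTlow.trans hTb
  have hwBfin : wMeas w B < ⊤ := wMeas_lt_top hw Metric.isBounded_closedBall
  have hr1 : (ENNReal.ofReal (c * (vB * S)) * wMeas w (cube r z₀)).toReal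
      = c * (vB * S) * W := by
    rw [ENNReal.toReal_mul, ENNReal.toReal_ofReal (by positivity), hW_def]
  have hr2 : (ENNReal.ofReal C * wMeas w B).toReal = C * (wMeas w B).toReal := by
    rw [ENNReal.toReal_mul, ENNReal.toReal_ofReal hC.le]
  have hreal : c * (vB * S) * W ≤ C * (wMeas w B).toReal := by
    rw [← hr1, ← hr2]
    exact ENNReal.toReal_mono (ENNReal.mul_ne_top ENNReal.ofReal_ne_top hwBfin.ne) hcomb
  have hintB : (wMeas w B).toReal = ∫ ξ in B, w ξ := by
    rw [wMeas_eq_ofReal_integral hw hwB, ENNReal.toReal_ofReal hintw_nonneg]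
  rw [hintB] at hreal
  have hfin2 : vB * (c * S * W) ≤ vB * (C * (⨍ ξ in B, w ξ)) := by
    calc vB * (c * S * W) = c * (vB * S) * W := by ring
      _ ≤ C * ∫ ξ in B, w ξ := hreal
      _ = vB * (C * ⨍ ξ in B, w ξ) := by
          rw [havgw]
          field_simp
  exact le_of_mul_le_mul_left hfin2 hvBpos
set_option maxHeartbeats 2000000 in
/-- If `T_φ` is bounded on `L^1_{α,w}` for an arbitrary weight `w`, then
`sup_{l(Q)=r} (v(Q)⁻¹∫_Q w dv) · esssup_{z∈Q} |φ(z)|/w(z) < ∞` for every `r > 0`. -/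
theorem toeplitz_boundedness_necessity_one (n : ℕ) (hn : 1 ≤ n) (α : ℝ)
    (hα : 0 < α)
    (φ : Cn n → ℂ) (hφ : MemLp φ ⊤ (volume : Measure (Cn n)))
    (w : Cn n → ℝ) (hw : IsWeight w)
    (hb : ∃ C > 0, ToeplitzBoundedWith α 1 w φ C) :
    ∀ r > 0, ∃ M : ℝ, ∀ z : Cn n,
      cubeAvg r z w *
        essSup (fun u => ENNReal.ofReal ‖φ u‖ / ENNReal.ofReal (w u))
          (volume.restrict (cube r z)) ≤ ENNReal.ofReal M := by
  intro r hr
  obtain ⟨C, hC, hbdd⟩ := hb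
  have hφm : AEStronglyMeasurable φ volume := hφ.1
  obtain ⟨K, hK0, hKbd⟩ : ∃ K : ℝ, 0 ≤ K ∧ ∀ᵐ ξ : Cn n, ‖φ ξ‖ ≤ K := by
    refine ⟨(eLpNormEssSup φ volume).toReal, ENNReal.toReal_nonneg, ?_⟩
    have hfin : eLpNormEssSup φ volume ≠ ⊤ := by
      have h2 := hφ.2
      rw [eLpNorm_exponent_top] at h2
      exact h2.ne
    filter_upwards [ae_le_eLpNormEssSup (f := φ) (μ := volume)] with ξ hξ
    calc ‖φ ξ‖ = ((‖φ ξ‖₊ : ℝ≥0∞)).toReal := by simp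
    _ ≤ (eLpNormEssSup φ volume).toReal := ENNReal.toReal_mono hfin hξ
  set c : ℝ := (α / Real.pi) ^ n with hc_def
  have hc : 0 < c := by
    have := Real.pi_pos
    positivity
  set κ : ℝ := Real.exp (-(α/2) * (2 * (r * Real.sqrt n))^2) with hκ_def
  have hκ : 0 < κ := Real.exp_pos _
  have hvQ0 : volume (cube r (0 : Cn n)) ≠ 0 := by
    refine ((isOpen_cube r 0).measure_pos volume ⟨0, ?_⟩).ne'
    intro j
    simp only [sub_self, Complex.zero_re, Complex.zero_im, abs_zero]
    constructor <;> positivity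
  have hvQtop : volume (cube r (0 : Cn n)) ≠ ⊤ :=
    ((measure_mono (cube_subset_closedBall hr.le 0)).trans_lt measure_closedBall_lt_top).ne
  set vq : ℝ := (volume (cube r (0 : Cn n))).toReal with hvq_def
  have hvq : 0 < vq := ENNReal.toReal_pos hvQ0 hvQtop
  -- Lebesgue points
  have hφloc : LocallyIntegrable φ volume := hφ.locallyIntegrable le_top
  set V := Besicovitch.vitaliFamily (volume : Measure (Cn n)) with hV
  have lebφ : ∀ᵐ u₀ : Cn n, Tendsto
      (fun δ : ℝ => ⨍ ξ in Metric.closedBall u₀ δ, ‖φ ξ - φ u₀‖) (𝓝[>] 0) (𝓝 0) := by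
    filter_upwards [V.ae_tendsto_average_norm_sub hφloc] with u₀ h using
      h.comp (Besicovitch.tendsto_filterAt volume u₀)
  have lebw : ∀ᵐ u₀ : Cn n, Tendsto
      (fun δ : ℝ => ⨍ ξ in Metric.closedBall u₀ δ, w ξ) (𝓝[>] 0) (𝓝 (w u₀)) := by
    filter_upwards [V.ae_tendsto_average hw.2] with u₀ h using
      h.comp (Besicovitch.tendsto_filterAt volume u₀)
  -- the key pointwise inequality at Lebesgue points
  have key : ∀ᵐ u₀ : Cn n, ∀ z₀ : Cn n, u₀ ∈ cube r z₀ →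
      c * κ * ‖φ u₀‖ * (wMeas w (cube r z₀)).toReal ≤ C * w u₀ := by
    filter_upwards [lebφ, lebw] with u₀ hLφ hLw
    intro z₀ hu₀Q
    have hQsub : cube r z₀ ⊆ Metric.closedBall z₀ (r * Real.sqrt n) :=
      cube_subset_closedBall hr.le z₀
    have hWfin : wMeas w (cube r z₀) < ⊤ :=
      wMeas_lt_top hw (Metric.isBounded_closedBall.subset hQsub)
    set W : ℝ := (wMeas w (cube r z₀)).toReal with hW_def
    have hW0 : 0 ≤ W := ENNReal.toReal_nonneg
    by_contra hcon
    push_neg at hcon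
    set η : ℝ := (c * κ * ‖φ u₀‖ * W - C * w u₀) / 2 with hη_def
    have hη : 0 < η := by simp only [hη_def]; linarith
    have hgoal : c * κ * ‖φ u₀‖ * W ≤ C * w u₀ + η → False := by
      intro h; simp only [hη_def] at h; linarith
    apply hgoal
    set ε : ℝ := η / (c * (‖φ u₀‖ + 1) * (W + 1)) with hε_def
    have hεpos : 0 < ε := by
      have h1 : 0 ≤ ‖φ u₀‖ := norm_nonneg _
      positivity
    obtain ⟨δ₀, hδ₀pos, hδ₀le, hUC⟩ : ∃ δ₀ : ℝ, 0 < δ₀ ∧ δ₀ ≤ 1 ∧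
        ∀ z ∈ Metric.closedBall z₀ (r * Real.sqrt n), ∀ ξ ∈ Metric.closedBall u₀ δ₀,
          ‖Hker α z ξ - Hker α z u₀‖ ≤ ε := by
      have hcomp : IsCompact ((Metric.closedBall z₀ (r * Real.sqrt n))
          ×ˢ (Metric.closedBall u₀ 1)) :=
        (isCompact_closedBall _ _).prod (isCompact_closedBall _ _)
      have huc := hcomp.uniformContinuousOn_of_continuous (continuous_Hker (n := n) α).continuousOn
      rw [Metric.uniformContinuousOn_iff] at huc
      obtain ⟨δ₁, hδ₁, hball⟩ := huc ε hεpos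
      refine ⟨min (δ₁/2) 1, by positivity, min_le_right _ _, ?_⟩
      intro z hz ξ hξ
      have hξ1 : ξ ∈ Metric.closedBall u₀ 1 :=
        Metric.closedBall_subset_closedBall (min_le_right _ _) hξ
      have hmem1 : (z, ξ) ∈ (Metric.closedBall z₀ (r * Real.sqrt n))
          ×ˢ (Metric.closedBall u₀ 1) := ⟨hz, hξ1⟩
      have hmem2 : (z, u₀) ∈ (Metric.closedBall z₀ (r * Real.sqrt n))
          ×ˢ (Metric.closedBall u₀ 1) := ⟨hz, Metric.mem_closedBall_self zero_le_one⟩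
      have hd : dist (z, ξ) (z, u₀) < δ₁ := by
        rw [Prod.dist_eq]
        simp only [dist_self]
        rw [max_eq_right dist_nonneg]
        calc dist ξ u₀ ≤ min (δ₁/2) 1 := hξ
        _ ≤ δ₁/2 := min_le_left _ _
        _ < δ₁ := by linarith
      have := hball _ hmem1 _ hmem2 hd
      rw [dist_eq_norm] at this
      exact this.le
    -- the per-δ estimate
    have main : ∀ δ : ℝ, δ ∈ Set.Ioc (0:ℝ) δ₀ →
        c * (κ * ‖φ u₀‖ - (⨍ ξ in Metric.closedBall u₀ δ, ‖φ ξ - φ u₀‖) - ε * ‖φ u₀‖) * W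
          ≤ C * ⨍ ξ in Metric.closedBall u₀ δ, w ξ := by
      rintro δ ⟨hδpos, hδle⟩
      exact per_delta_estimate hα hφm hK0 hKbd hw hC hbdd hr hu₀Q hεpos hδpos
        (fun z hz ξ hξ => hUC z hz ξ (Metric.closedBall_subset_closedBall hδle hξ))
    have hev : ∀ᶠ δ in 𝓝[>] (0:ℝ),
        c * (κ * ‖φ u₀‖ - (⨍ ξ in Metric.closedBall u₀ δ, ‖φ ξ - φ u₀‖) - ε * ‖φ u₀‖) * W
          ≤ C * ⨍ ξ in Metric.closedBall u₀ δ, w ξ :=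
      Filter.eventually_of_mem (Ioc_mem_nhdsGT_of_mem ⟨le_refl 0, hδ₀pos⟩) main
    have hlim1 : Tendsto (fun δ : ℝ =>
        c * (κ * ‖φ u₀‖ - (⨍ ξ in Metric.closedBall u₀ δ, ‖φ ξ - φ u₀‖) - ε * ‖φ u₀‖) * W)
        (𝓝[>] (0:ℝ)) (𝓝 (c * (κ * ‖φ u₀‖ - 0 - ε * ‖φ u₀‖) * W)) := by
      exact (((tendsto_const_nhds.sub hLφ).sub tendsto_const_nhds).const_mul c).mul_const W
    have hlim2 : Tendsto (fun δ : ℝ => C * ⨍ ξ in Metric.closedBall u₀ δ, w ξ)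
        (𝓝[>] (0:ℝ)) (𝓝 (C * w u₀)) := hLw.const_mul C
    have hfinal : c * (κ * ‖φ u₀‖ - 0 - ε * ‖φ u₀‖) * W ≤ C * w u₀ :=
      le_of_tendsto_of_tendsto hlim1 hlim2 hev
    have hεa : c * (ε * ‖φ u₀‖) * W ≤ η := by
      have h1 : c * (ε * ‖φ u₀‖) * W
          = η * ((c * ‖φ u₀‖ * W) / (c * (‖φ u₀‖ + 1) * (W + 1))) := by
        rw [hε_def]; field_simp
      have h2 : (c * ‖φ u₀‖ * W) / (c * (‖φ u₀‖ + 1) * (W + 1)) ≤ 1 := by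
        rw [div_le_one (by positivity)]
        nlinarith [norm_nonneg (φ u₀), hW0, hc]
      calc c * (ε * ‖φ u₀‖) * W
          = η * ((c * ‖φ u₀‖ * W) / (c * (‖φ u₀‖ + 1) * (W + 1))) := h1
        _ ≤ η * 1 := by
            exact mul_le_mul_of_nonneg_left h2 hη.le
        _ = η := mul_one η
    nlinarith [hfinal, hεa]
  -- conclusion
  refine ⟨C / (c * κ) / vq, ?_⟩
  intro z₀
  have hQsub : cube r z₀ ⊆ Metric.closedBall z₀ (r * Real.sqrt n) :=
    cube_subset_closedBall hr.le z₀
  have hWQfin : wMeas w (cube r z₀) < ⊤ :=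
    wMeas_lt_top hw (Metric.isBounded_closedBall.subset hQsub)
  have hvolQ : volume (cube r z₀) = volume (cube r (0 : Cn n)) := volume_cube_eq r z₀
  by_cases hWQ0 : wMeas w (cube r z₀) = 0
  · rw [cubeAvg]
    have h0 : (∫⁻ u in cube r z₀, ENNReal.ofReal (w u)) = 0 := hWQ0
    rw [h0, mul_zero, zero_mul]
    exact zero_le
  · have hA : cubeAvg r z₀ w
        = ENNReal.ofReal (vq⁻¹) * ENNReal.ofReal ((wMeas w (cube r z₀)).toReal) := by
      rw [cubeAvg]
      have h1 : (volume (cube r z₀))⁻¹ = ENNReal.ofReal (vq⁻¹) := by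
        rw [hvolQ, ENNReal.ofReal_inv_of_pos hvq, hvq_def, ENNReal.ofReal_toReal hvQtop]
      rw [h1, ENNReal.ofReal_toReal hWQfin.ne]
      rfl
    have hWpos : 0 < (wMeas w (cube r z₀)).toReal := ENNReal.toReal_pos hWQ0 hWQfin.ne
    have hae : ∀ᵐ u ∂(volume.restrict (cube r z₀)),
        cubeAvg r z₀ w * (ENNReal.ofReal ‖φ u‖ / ENNReal.ofReal (w u))
          ≤ ENNReal.ofReal (C / (c * κ) / vq) := by
      filter_upwards [ae_restrict_of_ae key, ae_restrict_mem (measurableSet_cube r z₀)]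
        with u hu huQ
      have hkey := hu z₀ huQ
      by_cases hwu : w u = 0
      · have hφ0 : ‖φ u‖ = 0 := by
          rw [hwu, mul_zero] at hkey
          have hle : ‖φ u‖ ≤ 0 := by
            by_contra hpos
            push_neg at hpos
            have h2 := mul_pos (mul_pos (mul_pos hc hκ) hpos) hWpos
            nlinarith [h2, hkey]
          exact le_antisymm hle (norm_nonneg _)
        rw [hφ0, hwu]
        simp
      · have hwupos : 0 < w u := (hw.1 u).lt_of_ne (Ne.symm hwu)
        rw [hA, ← ENNReal.ofReal_div_of_pos hwupos]
        rw [← ENNReal.ofReal_mul (inv_nonneg.mpr hvq.le),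
          ← ENNReal.ofReal_mul (mul_nonneg (inv_nonneg.mpr hvq.le) ENNReal.toReal_nonneg)]
        apply ENNReal.ofReal_le_ofReal
        have hstep : ‖φ u‖ / w u * (wMeas w (cube r z₀)).toReal ≤ C / (c * κ) := by
          rw [div_mul_eq_mul_div, div_le_div_iff₀ hwupos (by positivity)]
          nlinarith [hkey]
        calc vq⁻¹ * (wMeas w (cube r z₀)).toReal * (‖φ u‖ / w u)
            = (‖φ u‖ / w u * (wMeas w (cube r z₀)).toReal) * vq⁻¹ := by ring
          _ ≤ (C / (c * κ)) * vq⁻¹ := by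
              exact mul_le_mul_of_nonneg_right hstep (by positivity)
          _ = C / (c * κ) / vq := by rw [div_div, div_eq_mul_inv, mul_inv]; ring
              
    calc cubeAvg r z₀ w * essSup (fun u => ENNReal.ofReal ‖φ u‖ / ENNReal.ofReal (w u))
          (volume.restrict (cube r z₀))
        = essSup (fun u => cubeAvg r z₀ w * (ENNReal.ofReal ‖φ u‖ / ENNReal.ofReal (w u)))
          (volume.restrict (cube r z₀)) := (ENNReal.essSup_const_mul).symm
      _ ≤ ENNReal.ofReal (C / (c * κ) / vq) := essSup_le_of_ae_le _ hae
end
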